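/- arXiv:1312.2226 — 3 statements merged into one kernel-verified Lean document; each statement's English description precedes it below -/
import Mathlib

section
/- Let (U, S) be a Set-Cover instance with U a finite nonempty universe and S = {S_1, …, S_m} a family of subsets of U with ⋃_{i=1}^m S_i = U, and let A(U, S) be the automaton with state set U ∪ {q̂} (q̂ ∉ U), alphabet {a_1, …, a_m}, and δ(u, a_i) = q̂ if u ∈ S_i, δ(u, a_i) = u if u ∉ S_i, and δ(q̂, a_i) = q̂ for all i. Then A(U, S) is synchronizing and its reset threshold rt(A(U, S)) equals OPT(U, S), the minimum cardinality of a subfamily C ⊆ S with ⋃_{T ∈ C} T = U; moreover A(U, S) has |U| + 1 states and |S| letters. -/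
/-- The action of a word `w` on a state `q` in the DFA with transition function `δ`. -/
def wordAct {Q A : Type*} (δ : Q → A → Q) (q : Q) (w : List A) : Q :=
  w.foldl δ q

/-- `w` is a reset word: it sends all states to one common state. -/
def IsResetWord {Q A : Type*} (δ : Q → A → Q) (w : List A) : Prop :=
  ∀ p q : Q, wordAct δ p w = wordAct δ q w

/-- A DFA is synchronizing if it admits a reset word. -/
def Synchronizing {Q A : Type*} (δ : Q → A → Q) : Prop :=
  ∃ w : List A, IsResetWord δ w

/-- The reset threshold: the minimum length of a reset word. -/
noncomputable def resetThreshold {Q A : Type*} (δ : Q → A → Q) : ℕ :=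
  sInf {n : ℕ | ∃ w : List A, w.length = n ∧ IsResetWord δ w}

/-- The Set-Cover automaton `A(U, S)`: states are `U ∪ {q̂}` (with `none` playing
the role of the sink state `q̂`), and the letter `a_i` sends `u` to `q̂` if `u ∈ S i`
and fixes `u` otherwise; `q̂` is fixed by all letters. -/
def scAut {U : Type*} [DecidableEq U] {m : ℕ} (S : Fin m → Finset U) :
    Option U → Fin m → Option U
  | none, _ => none
  | some u, i => if u ∈ S i then none else some u

/-- The minimum cardinality of a subfamily of `S` covering the universe. -/
noncomputable def setCoverOPT {U : Type*} {m : ℕ} (S : Fin m → Finset U) : ℕ :=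
  sInf {c : ℕ | ∃ C : Finset (Fin m), C.card = c ∧ ∀ u : U, ∃ i ∈ C, u ∈ S i}

/-!
Every letter of `A(U, S)` fixes the sink and either fixes a state `u` or sends it to the sink,
so a word `w` sends `u` to the sink exactly when some letter of `w` names a set containing `u`.
Hence `w` is a reset word iff the letters occurring in `w` form a cover: a cover `C` gives the
reset word `C.toList` of length `|C|`, and a reset word `w` gives the cover `w.toFinset` of size
at most `|w|`.
-/

@[simp]
lemma wordAct_nil {Q A : Type*} (δ : Q → A → Q) (q : Q) : wordAct δ q [] = q := rfl

@[simp]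
lemma wordAct_cons {Q A : Type*} (δ : Q → A → Q) (q : Q) (a : A) (w : List A) :
    wordAct δ q (a :: w) = wordAct δ (δ q a) w := rfl

lemma resetThreshold_le {Q A : Type*} {δ : Q → A → Q} {w : List A} (hw : IsResetWord δ w) :
    resetThreshold δ ≤ w.length :=
  Nat.sInf_le ⟨w, rfl, hw⟩

lemma exists_isResetWord_length_eq_resetThreshold {Q A : Type*} {δ : Q → A → Q}
    (h : Synchronizing δ) : ∃ w : List A, w.length = resetThreshold δ ∧ IsResetWord δ w :=
  let ⟨w, hw⟩ := h
  Nat.sInf_mem (s := {n | ∃ w : List A, w.length = n ∧ IsResetWord δ w}) ⟨_, w, rfl, hw⟩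

section SetCover

variable {U : Type*} {m : ℕ} {S : Fin m → Finset U}

lemma setCoverOPT_le {C : Finset (Fin m)} (hC : ∀ u : U, ∃ i ∈ C, u ∈ S i) :
    setCoverOPT S ≤ C.card :=
  Nat.sInf_le ⟨C, rfl, hC⟩

lemma exists_cover_card_eq_setCoverOPT (hcover : ∀ u : U, ∃ i, u ∈ S i) :
    ∃ C : Finset (Fin m), C.card = setCoverOPT S ∧ ∀ u : U, ∃ i ∈ C, u ∈ S i :=
  Nat.sInf_mem (s := {c | ∃ C : Finset (Fin m), C.card = c ∧ ∀ u : U, ∃ i ∈ C, u ∈ S i})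
    ⟨_, Finset.univ, rfl, fun u =>
      let ⟨i, hi⟩ := hcover u
      ⟨i, Finset.mem_univ i, hi⟩⟩

variable [DecidableEq U]

@[simp]
lemma scAut_wordAct_none (w : List (Fin m)) :
    wordAct (scAut S) none w = none := by
  induction w with
  | nil => rfl
  | cons a w ih => simpa [scAut] using ih

lemma scAut_wordAct_some (u : U) (w : List (Fin m)) :
    wordAct (scAut S) (some u) w = if ∃ i ∈ w, u ∈ S i then none else some u := by
  induction w with
  | nil => simp
  | cons a w ih =>
    by_cases h : u ∈ S a <;> simp [scAut, h, ih]

lemma scAut_isResetWord_iff {w : List (Fin m)} :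
    IsResetWord (scAut S) w ↔ ∀ u : U, ∃ i ∈ w, u ∈ S i := by
  have sink_iff (u : U) : wordAct (scAut S) (some u) w = none ↔ ∃ i ∈ w, u ∈ S i := by
    simp [scAut_wordAct_some]
  constructor
  · intro hw u
    exact (sink_iff u).mp ((hw (some u) none).trans (scAut_wordAct_none w))
  · intro hw p q
    have all_sink : ∀ r : Option U, wordAct (scAut S) r w = none
      | none => scAut_wordAct_none w
      | some u => (sink_iff u).mpr (hw u)
    rw [all_sink p, all_sink q]

lemma scAut_isResetWord_toList {C : Finset (Fin m)} (hC : ∀ u : U, ∃ i ∈ C, u ∈ S i) :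
    IsResetWord (scAut S) C.toList :=
  scAut_isResetWord_iff.mpr fun u => (hC u).imp fun _ ⟨hi, hu⟩ => ⟨Finset.mem_toList.mpr hi, hu⟩

lemma scAut_cover_toFinset {w : List (Fin m)} (hw : IsResetWord (scAut S) w) :
    ∀ u : U, ∃ i ∈ w.toFinset, u ∈ S i := fun u =>
  (scAut_isResetWord_iff.mp hw u).imp fun _ ⟨hi, hu⟩ => ⟨List.mem_toFinset.mpr hi, hu⟩

end SetCover

theorem scAut_resetThreshold_eq_OPT_general {U : Type*} [Fintype U] [DecidableEq U]
    {m : ℕ} (S : Fin m → Finset U) (hcover : ∀ u : U, ∃ i, u ∈ S i) :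
    Synchronizing (scAut S) ∧
    resetThreshold (scAut S) = setCoverOPT S ∧
    Fintype.card (Option U) = Fintype.card U + 1 ∧
    Fintype.card (Fin m) = m := by
  obtain ⟨C, hCcard, hC⟩ := exists_cover_card_eq_setCoverOPT hcover
  have hsync : Synchronizing (scAut S) := ⟨C.toList, scAut_isResetWord_toList hC⟩
  obtain ⟨w, hwlen, hw⟩ := exists_isResetWord_length_eq_resetThreshold hsync
  refine ⟨hsync, le_antisymm ?_ ?_, Fintype.card_option, Fintype.card_fin m⟩
  · calc resetThreshold (scAut S) ≤ C.toList.length :=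
          resetThreshold_le (scAut_isResetWord_toList hC)
      _ = setCoverOPT S := by rw [Finset.length_toList, hCcard]
  · calc setCoverOPT S ≤ w.toFinset.card := setCoverOPT_le (scAut_cover_toFinset hw)
      _ ≤ w.length := w.toFinset_card_le
      _ = resetThreshold (scAut S) := hwlen

/-- The Set-Cover automaton of a Set-Cover instance `(U, S)` (with `S` covering `U`)
is synchronizing, its reset threshold equals `OPT(U, S)`, it has `|U| + 1` states
and `|S| = m` letters. -/
theorem scAut_resetThreshold_eq_OPT {U : Type*} [Fintype U] [DecidableEq U]
    [Nonempty U] {m : ℕ} (S : Fin m → Finset U) (hcover : ∀ u : U, ∃ i, u ∈ S i) :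
    Synchronizing (scAut S) ∧
    resetThreshold (scAut S) = setCoverOPT S ∧
    Fintype.card (Option U) = Fintype.card U + 1 ∧
    Fintype.card (Fin m) = m :=
  scAut_resetThreshold_eq_OPT_general S hcover
end

section
/- Let A = (Q, Σ, δ) be a synchronizing automaton with Σ = {a_1, …, a_m}, m = 2^k for some k ≥ 1, and let B(A) = (Q × {0,1}^{≤ k}, {0,1}, δ') be the 2-letter automaton with δ'((q, w), x) = (q, wx) if |w| < k; δ'((q, w), 1) = (δ(q, a_{ℓ(w)}), λ) if |w| = k; and δ'((q, w), 0) = (q, w) if |w| = k, where ℓ : {0,1}^k → {1, …, m} is the lexicographic enumeration. Then rt(B(A)) ≥ (k + 1) · rt(A). -/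
/-- The value of a binary string read most-significant-bit first.  For strings of a
fixed length `k`, lexicographic order (with `false < true`) agrees with the order of
`bitVal`, so the lexicographic index `ℓ(w) ∈ {1, …, 2^k}` equals `bitVal w + 1`. -/
def bitVal : List Bool → ℕ
  | [] => 0
  | b :: t => (if b then 1 else 0) * 2 ^ t.length + bitVal t

/-- The length-`k` binary string whose `bitVal` is `n % 2^k`; i.e. `ℓ⁻¹(n+1)` for `n < 2^k`. -/
def bits : ℕ → ℕ → List Bool
  | 0, _ => []
  | k + 1, n => decide (2 ^ k ≤ n % 2 ^ (k + 1)) :: bits k n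

/-- The transition function of the 2-letter automaton `B(A)` on `Q × {0,1}^{≤k}`:
if `|w| < k` the letter is appended; if `|w| = k`, letter `1` applies the letter
`a_{ℓ(w)}` of `A` and resets the string to `λ`, while letter `0` does nothing. -/
def deltaB {Q : Type*} (k : ℕ) (δ : Q → Fin (2 ^ k) → Q) :
    Q × {w : List Bool // w.length ≤ k} → Bool →
      Q × {w : List Bool // w.length ≤ k} :=
  fun s x =>
    if h : s.2.val.length < k then
      (s.1, ⟨s.2.val ++ [x], by simpa using h⟩)
    else if x then
      (δ s.1 ⟨bitVal s.2.val % 2 ^ k, Nat.mod_lt _ (by positivity)⟩,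
        ⟨[], by simp⟩)
    else s

/-!
`B(A)` is the cascade of `A` with a transducer on the buffer `{0,1}^{≤k}`: the buffer emits a
letter of `A` only when a `1` is read on a full buffer, so a buffer run starting at `λ` emits at
most one letter per `k + 1` letters read (the potential `|w|` pays for the rest). Hence the
letters of `A` emitted while a reset word of `B(A)` is read from the states `(q, λ)` form a
reset word of `A` at least `k + 1` times shorter. Since `resetThreshold` of a non-synchronizing
automaton is `sInf ∅ = 0`, we also need `B(A)` to be synchronizing: `0^k 1` brings every buffer
back to `λ`, after which a reset word of `A` can be typed letter by letter as `ℓ⁻¹(a) 1`.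
-/

section Cascade

variable {Q S X A : Type*}

lemma wordAct_append (δ : Q → A → Q) (q : Q) (u v : List A) :
    wordAct δ q (u ++ v) = wordAct δ (wordAct δ q u) v :=
  List.foldl_append

/-- The output of the sequential transducer with transitions `next` and word outputs `out`. -/
def outputWord (next : S → X → S) (out : S → X → List A) : S → List X → List A
  | _, [] => []
  | s, x :: v => out s x ++ outputWord next out (next s x) v

variable {next : S → X → S} {out : S → X → List A}

lemma outputWord_append (s : S) (u v : List X) :
    outputWord next out s (u ++ v) =
      outputWord next out s u ++ outputWord next out (wordAct next s u) v := by
  induction u generalizing s with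
  | nil => rfl
  | cons x u ih => simp [outputWord, ih, wordAct]

lemma exists_outputWord_eq_of_forall_singleton {s₀ : S}
    (hletter : ∀ a : A, ∃ e, outputWord next out s₀ e = [a] ∧ wordAct next s₀ e = s₀)
    (w : List A) : ∃ e, outputWord next out s₀ e = w ∧ wordAct next s₀ e = s₀ := by
  induction w with
  | nil => exact ⟨[], rfl, rfl⟩
  | cons a w ih =>
    obtain ⟨e, he, hs⟩ := hletter a
    obtain ⟨f, hf, hs'⟩ := ih
    exact ⟨e ++ f, by rw [outputWord_append, hs, he, hf]; rfl, by rw [wordAct_append, hs, hs']⟩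

lemma mul_length_outputWord_add_le (φ : S → ℕ) (c : ℕ)
    (hstep : ∀ s x, c * (out s x).length + φ (next s x) ≤ φ s + 1) (s : S) (v : List X) :
    c * (outputWord next out s v).length + φ (wordAct next s v) ≤ φ s + v.length := by
  induction v generalizing s with
  | nil => simp [outputWord, wordAct]
  | cons x v ih =>
    have h₁ := hstep s x
    have h₂ := ih (next s x)
    simp only [outputWord, List.length_append, List.length_cons, mul_add]
    change _ + φ (wordAct next (next s x) v) ≤ _
    omega

variable {δ : Q → A → Q} {δ' : Q × S → X → Q × S}

lemma wordAct_cascade (hδ' : ∀ q s x, δ' (q, s) x = (wordAct δ q (out s x), next s x))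
    (q : Q) (s : S) (v : List X) :
    wordAct δ' (q, s) v = (wordAct δ q (outputWord next out s v), wordAct next s v) := by
  induction v generalizing q s with
  | nil => rfl
  | cons x v ih =>
    change wordAct δ' (δ' (q, s) x) v = _
    rw [hδ', ih, outputWord, wordAct_append]
    rfl

lemma IsResetWord.outputWord_of_cascade
    (hδ' : ∀ q s x, δ' (q, s) x = (wordAct δ q (out s x), next s x))
    {v : List X} (hv : IsResetWord δ' v) (s : S) : IsResetWord δ (outputWord next out s v) :=
  fun p q => by simpa [wordAct_cascade hδ'] using congrArg Prod.fst (hv (p, s) (q, s))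

lemma mul_resetThreshold_le_of_cascade
    (hδ' : ∀ q s x, δ' (q, s) x = (wordAct δ q (out s x), next s x))
    (hsync : Synchronizing δ') (s₀ : S) (φ : S → ℕ) (hφ : φ s₀ = 0) (c : ℕ)
    (hstep : ∀ s x, c * (out s x).length + φ (next s x) ≤ φ s + 1) :
    c * resetThreshold δ ≤ resetThreshold δ' := by
  obtain ⟨v₀, hv₀⟩ := hsync
  refine le_csInf ⟨_, v₀, rfl, hv₀⟩ ?_
  rintro _ ⟨v, rfl, hv⟩
  calc c * resetThreshold δ
      ≤ c * (outputWord next out s₀ v).length :=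
        Nat.mul_le_mul_left c (Nat.sInf_le ⟨_, rfl, hv.outputWord_of_cascade hδ' s₀⟩)
    _ ≤ v.length := by
        have := mul_length_outputWord_add_le φ c hstep s₀ v
        omega

/-- The reset word is `u` followed by a loop at `s₀` that writes a reset word of `δ`. -/
lemma Synchronizing.of_cascade
    (hδ' : ∀ q s x, δ' (q, s) x = (wordAct δ q (out s x), next s x))
    (hsync : Synchronizing δ) {s₀ : S} {u : List X} (hu : ∀ s, wordAct next s u = s₀)
    (hletter : ∀ a : A, ∃ e, outputWord next out s₀ e = [a] ∧ wordAct next s₀ e = s₀) :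
    Synchronizing δ' := by
  obtain ⟨w, hw⟩ := hsync
  obtain ⟨e, he, hs⟩ := exists_outputWord_eq_of_forall_singleton hletter w
  have hue : ∀ q s, wordAct δ' (q, s) (u ++ e) =
      (wordAct δ (wordAct δ q (outputWord next out s u)) w, s₀) := fun q s => by
    rw [wordAct_append, wordAct_cascade hδ' q s u, hu, wordAct_cascade hδ', he, hs]
  exact ⟨u ++ e, fun ⟨p, s⟩ ⟨q, t⟩ => by rw [hue, hue, hw]⟩

end Cascade

lemma length_bits (k n : ℕ) : (bits k n).length = k := by
  induction k <;> simp [bits, *]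

lemma bitVal_bits (k n : ℕ) : bitVal (bits k n) = n % 2 ^ k := by
  induction k with
  | zero => simp [bits, bitVal, Nat.mod_one]
  | succ k ih =>
    have hlow : n % 2 ^ k < 2 ^ k := Nat.mod_lt _ (by positivity)
    simp only [bits, bitVal, ih, Nat.mod_pow_succ (x := n), length_bits]
    rcases Nat.mod_two_eq_zero_or_one (n / 2 ^ k) with h | h <;> simp [h, hlow.not_ge, add_comm]

section Buffer

variable (k : ℕ)

abbrev Buffer := {w : List Bool // w.length ≤ k}

def bufferNext (b : Buffer k) (x : Bool) : Buffer k :=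
  if h : b.val.length < k then ⟨b.val ++ [x], by simpa using h⟩
  else if x then ⟨[], Nat.zero_le k⟩ else b

def bufferOut (b : Buffer k) (x : Bool) : List (Fin (2 ^ k)) :=
  if b.val.length < k then []
  else if x then [⟨bitVal b.val % 2 ^ k, Nat.mod_lt _ (by positivity)⟩] else []

lemma deltaB_eq_cascade {Q : Type*} (δ : Q → Fin (2 ^ k) → Q) (q : Q) (b : Buffer k)
    (x : Bool) : deltaB k δ (q, b) x = (wordAct δ q (bufferOut k b x), bufferNext k b x) := by
  unfold deltaB bufferOut bufferNext
  split_ifs <;> rfl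

lemma mul_length_bufferOut_add_le (b : Buffer k) (x : Bool) :
    (k + 1) * (bufferOut k b x).length + (bufferNext k b x).val.length ≤ b.val.length + 1 := by
  have := b.2
  unfold bufferOut bufferNext
  split_ifs <;> simp
  omega

lemma length_wordAct_bufferNext_replicate_false (j : ℕ) (b : Buffer k) :
    (wordAct (bufferNext k) b (List.replicate j false)).val.length = min k (b.val.length + j) := by
  induction j generalizing b with
  | zero => simpa [wordAct] using b.2
  | succ j ih =>
    change (wordAct (bufferNext k) (bufferNext k b false) (List.replicate j false)).val.length = _
    rw [ih]
    have := b.2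
    by_cases h : (b : List Bool).length < k <;> simp [bufferNext, h] <;> omega

lemma wordAct_bufferNext_replicate_false_append_true (b : Buffer k) :
    wordAct (bufferNext k) b (List.replicate k false ++ [true]) = ⟨[], Nat.zero_le k⟩ := by
  have hfull := length_wordAct_bufferNext_replicate_false k k b
  rw [wordAct_append]
  change bufferNext k (wordAct (bufferNext k) b (List.replicate k false)) true = _
  simp [bufferNext, hfull]

lemma wordAct_bufferNext_of_length_add_le (b : Buffer k) (c : List Bool)
    (hc : b.val.length + c.length ≤ k) :
    (wordAct (bufferNext k) b c).val = b.val ++ c ∧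
      outputWord (bufferNext k) (bufferOut k) b c = [] := by
  induction c generalizing b with
  | nil => simp [wordAct, outputWord]
  | cons x c ih =>
    have hlt : b.val.length < k := by simp at hc; omega
    have := ih (bufferNext k b x) (by simp [bufferNext, hlt] at hc ⊢; omega)
    simpa [wordAct, outputWord, bufferNext, bufferOut, hlt] using this

lemma outputWord_bits_append_true (a : Fin (2 ^ k)) :
    outputWord (bufferNext k) (bufferOut k) ⟨[], Nat.zero_le k⟩ (bits k a ++ [true]) = [a] ∧
      wordAct (bufferNext k) ⟨[], Nat.zero_le k⟩ (bits k a ++ [true]) =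
        ⟨[], Nat.zero_le k⟩ := by
  obtain ⟨hval, hout⟩ :=
    wordAct_bufferNext_of_length_add_le k ⟨[], Nat.zero_le k⟩ (bits k a) (by simp [length_bits])
  have hfull : ¬ (wordAct (bufferNext k) ⟨[], Nat.zero_le k⟩ (bits k a)).val.length < k := by
    simp [hval, length_bits]
  constructor
  · rw [outputWord_append, hout]
    simp [outputWord, bufferOut, hval, length_bits, bitVal_bits, Nat.mod_eq_of_lt a.isLt]
  · rw [wordAct_append]
    change bufferNext k _ true = _
    simp [bufferNext, hfull]

end Buffer

theorem encoded_reset_threshold_lower_bound_general {Q : Type}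
    (k : ℕ) (δ : Q → Fin (2 ^ k) → Q) (hsync : Synchronizing δ) :
    (k + 1) * resetThreshold δ ≤ resetThreshold (deltaB k δ) := by
  have hcascade := deltaB_eq_cascade k δ
  have hsyncB : Synchronizing (deltaB k δ) :=
    hsync.of_cascade hcascade (wordAct_bufferNext_replicate_false_append_true k)
      fun a => ⟨_, outputWord_bits_append_true k a⟩
  exact mul_resetThreshold_le_of_cascade hcascade hsyncB ⟨[], Nat.zero_le k⟩
    (fun b => b.val.length) rfl (k + 1) (mul_length_bufferOut_add_le k)

/-- The lower bound of the encoding lemma: `rt(B(A)) ≥ (k+1) · rt(A)`. -/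
theorem encoded_reset_threshold_lower_bound {Q : Type} [Fintype Q] [Nonempty Q]
    (k : ℕ) (hk : 1 ≤ k) (δ : Q → Fin (2 ^ k) → Q) (hsync : Synchronizing δ) :
    (k + 1) * resetThreshold δ ≤ resetThreshold (deltaB k δ) :=
  encoded_reset_threshold_lower_bound_general k δ hsync
end

section
/- There exists a constant C > 0 such that for every n ≥ 1, when two functions a, b : {1, …, n} → {1, …, n} are chosen uniformly and independently at random, the probability that the automaton ({1, …, n}, {a, b}) has a subautomaton with fewer than n/(4e²) states (i.e. a nonempty subset of states closed under both a and b of size less than n/(4e²)) is at most C/n. Equivalently, with probability 1 − O(1/n), every subautomaton has at least n/(4e²) states. -/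
/-!
Union bound over the candidate state sets `P`. A fixed `k`-set is closed under a uniform random
map with probability `(k/n)^k`, hence under both letters with probability `(k/n)^(2k)`. Since
`C(n,k) ≤ (en/k)^k`, the `k`-sets contribute at most `(ek/n)^k`, and once `4ek ≤ n` this is at
most `(e/n) 2^(1-k)`; summing over `k ≥ 1` gives `2e/n`.
-/

open scoped Classical in
/-- The probability, for a pair of transition functions `(a, b)` chosen uniformly and
independently among all maps `{1,…,n} → {1,…,n}`, that the resulting 2-letter
automaton has a subautomaton (a nonempty subset of states closed under both letters)
with fewer than `n / (4e²)` states. -/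
noncomputable def probSmallSubautomaton (n : ℕ) : ℝ :=
  ((Finset.univ.filter fun fg : (Fin n → Fin n) × (Fin n → Fin n) =>
      ∃ P : Finset (Fin n), P.Nonempty ∧
        (∀ q ∈ P, fg.1 q ∈ P ∧ fg.2 q ∈ P) ∧
        (P.card : ℝ) < n / (4 * Real.exp 1 ^ 2)).card : ℝ) /
    (Fintype.card ((Fin n → Fin n) × (Fin n → Fin n)) : ℝ)

open Finset Real

lemma card_filter_forall_mem_apply_mem {α β : Type*} [Fintype α] [DecidableEq α] [Fintype β]
    [DecidableEq β] (s : Finset α) (t : Finset β) :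
    #{f : α → β | ∀ x ∈ s, f x ∈ t} = #t ^ #s * Fintype.card β ^ (Fintype.card α - #s) := by
  have hpi : ({f : α → β | ∀ x ∈ s, f x ∈ t} : Finset _) =
      Fintype.piFinset fun x => if x ∈ s then t else univ := by
    ext f
    simp only [mem_filter, mem_univ, true_and, Fintype.mem_piFinset]
    refine ⟨fun h x => ?_, fun h x hx => by simpa [hx] using h x⟩
    split_ifs with hx
    · exact h x hx
    · exact mem_univ _
  rw [hpi, Fintype.card_piFinset]
  simp [apply_ite card, prod_ite, filter_notMem_eq_sdiff, card_univ_sdiff]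

lemma card_filter_forall_mem_apply_mem_self_div {α : Type*} [Fintype α] [DecidableEq α]
    (s : Finset α) :
    (#{f : α → α | ∀ x ∈ s, f x ∈ s} : ℝ) / Fintype.card α ^ Fintype.card α
      = (#s / Fintype.card α) ^ #s := by
  rcases (Fintype.card α).eq_zero_or_pos with hα | hα
  · have : s = ∅ := card_eq_zero.mp (Nat.le_zero.mp (hα ▸ card_le_univ s))
    simp [this, hα]
  rw [card_filter_forall_mem_apply_mem]
  push_cast
  rw [pow_sub₀ _ (by positivity) (card_le_univ s), div_pow]
  field_simp

lemma card_filter_forall_mem_apply_mem_and_div {α : Type*} [Fintype α] [DecidableEq α]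
    (s : Finset α) :
    (#{fg : (α → α) × (α → α) | ∀ x ∈ s, fg.1 x ∈ s ∧ fg.2 x ∈ s} : ℝ)
        / Fintype.card ((α → α) × (α → α))
      = ((#s / Fintype.card α : ℝ) ^ #s) ^ 2 := by
  have hprod : ({fg : (α → α) × (α → α) | ∀ x ∈ s, fg.1 x ∈ s ∧ fg.2 x ∈ s} : Finset _) =
      ({f : α → α | ∀ x ∈ s, f x ∈ s} : Finset _) ×ˢ
        ({f : α → α | ∀ x ∈ s, f x ∈ s} : Finset _) := by
    ext
    simp only [mem_filter, mem_univ, true_and, mem_product, forall_and]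
  rw [hprod, card_product, Fintype.card_prod, Fintype.card_fun, ←
    card_filter_forall_mem_apply_mem_self_div]
  push_cast
  ring

lemma card_filter_exists_mem_le_sum {ι α : Type*} [DecidableEq α] (s : Finset ι) (t : Finset α)
    (p : ι → α → Prop) [∀ i, DecidablePred (p i)] :
    #{a ∈ t | ∃ i ∈ s, p i a} ≤ ∑ i ∈ s, #{a ∈ t | p i a} := by
  refine (card_le_card fun a ha => ?_).trans card_biUnion_le
  obtain ⟨hat, i, hi, hpa⟩ := mem_filter.mp ha
  exact mem_biUnion.mpr ⟨i, hi, mem_filter.mpr ⟨hat, hpa⟩⟩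

lemma card_filter_exists_closed_div_le_sum {α : Type*} [Fintype α] [DecidableEq α]
    (S : Finset (Finset α)) :
    (#{fg : (α → α) × (α → α) | ∃ P ∈ S, ∀ x ∈ P, fg.1 x ∈ P ∧ fg.2 x ∈ P} : ℝ)
        / Fintype.card ((α → α) × (α → α))
      ≤ ∑ P ∈ S, ((#P / Fintype.card α : ℝ) ^ #P) ^ 2 := by
  simp only [← card_filter_forall_mem_apply_mem_and_div, ← sum_div]
  gcongr
  exact_mod_cast card_filter_exists_mem_le_sum S univ
    fun P (fg : (α → α) × (α → α)) => ∀ x ∈ P, fg.1 x ∈ P ∧ fg.2 x ∈ P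

lemma sum_filter_card_eq_sum_choose {α β : Type*} [Fintype α] [NonAssocSemiring β]
    (p : ℕ → Prop) [DecidablePred p] (f : ℕ → β) :
    ∑ s : Finset α with p #s, f #s
      = ∑ k ∈ range (Fintype.card α + 1) with p k, ((Fintype.card α).choose k : β) * f k := by
  rw [sum_filter, sum_filter, ← powerset_univ,
    sum_powerset_apply_card fun k => if p k then f k else 0, card_univ]
  simp [nsmul_eq_mul]

lemma choose_mul_div_pow_sq_le {n : ℕ} (hn : n ≠ 0) (k : ℕ) :
    (n.choose k : ℝ) * (((k : ℝ) / n) ^ k) ^ 2 ≤ (exp 1 * k / n) ^ k := by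
  have hk : (k : ℝ) ^ k / k.factorial ≤ exp 1 ^ k := by
    simpa [← exp_nat_mul] using pow_div_factorial_le_exp (k : ℝ) k.cast_nonneg k
  calc (n.choose k : ℝ) * (((k : ℝ) / n) ^ k) ^ 2
      ≤ (n : ℝ) ^ k / k.factorial * (((k : ℝ) / n) ^ k) ^ 2 := by
        gcongr
        exact Nat.choose_le_pow_div k n
    _ = (k : ℝ) ^ k / k.factorial * ((k : ℝ) / n) ^ k := by
        rw [div_pow]
        field_simp
    _ ≤ exp 1 ^ k * ((k : ℝ) / n) ^ k := by gcongr
    _ = (exp 1 * k / n) ^ k := by rw [mul_div_assoc, mul_pow]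

lemma nat_mul_pow_self_le {k : ℕ} (hk : k ≠ 0) {r : ℝ} (hr : 0 ≤ r) (hkr : k * r ≤ 1 / 4) :
    (k * r) ^ k ≤ r * (1 / 2) ^ (k - 1) := by
  obtain ⟨j, rfl⟩ := Nat.exists_eq_add_one_of_ne_zero hk
  have hj : (j + 1 : ℝ) ≤ 2 ^ j := by exact_mod_cast Nat.lt_two_pow_self
  calc ((j + 1 : ℕ) * r) ^ (j + 1) = (j + 1) * r * ((j + 1 : ℕ) * r) ^ j := by
        push_cast; ring
    _ ≤ (j + 1) * r * (1 / 4) ^ j := by gcongr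
    _ ≤ 2 ^ j * r * (1 / 4) ^ j := by gcongr
    _ = r * (1 / 2) ^ (j + 1 - 1) := by
        rw [Nat.add_sub_cancel, mul_comm _ r, mul_assoc, ← mul_pow]; norm_num

lemma sum_choose_mul_div_pow_sq_le {n : ℕ} (hn : n ≠ 0) {s : Finset ℕ}
    (hs : ∀ k ∈ s, k ≠ 0 ∧ 4 * exp 1 * k ≤ n) :
    ∑ k ∈ s, (n.choose k : ℝ) * (((k : ℝ) / n) ^ k) ^ 2 ≤ 2 * exp 1 / n := by
  have hr : 0 ≤ exp 1 / n := by positivity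
  have hinj : Set.InjOn (· - 1) (s : Set ℕ) := fun a ha b hb hab => by
    have := (hs a ha).1; have := (hs b hb).1; simp only at hab; omega
  calc ∑ k ∈ s, (n.choose k : ℝ) * (((k : ℝ) / n) ^ k) ^ 2
      ≤ ∑ k ∈ s, exp 1 / n * (1 / 2) ^ (k - 1) := by
        refine sum_le_sum fun k hk => (choose_mul_div_pow_sq_le hn k).trans ?_
        have hkr : (k : ℝ) * (exp 1 / n) ≤ 1 / 4 := by
          rw [← mul_div_assoc, div_le_iff₀ (by positivity)]
          linarith [(hs k hk).2]
        exact (by ring : (exp 1 * k / n) ^ k = _).trans_le (nat_mul_pow_self_le (hs k hk).1 hr hkr)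
    _ = exp 1 / n * ∑ j ∈ s.image (· - 1), (1 / 2 : ℝ) ^ j := by
        rw [sum_image hinj, mul_sum]
    _ ≤ exp 1 / n * 2 := by
        gcongr
        exact (summable_geometric_two.sum_le_tsum _ fun _ _ => by positivity).trans_eq
          tsum_geometric_two
    _ = 2 * exp 1 / n := by ring

/-- With probability `1 − O(1/n)`, every subautomaton of a uniformly random 2-letter
`n`-state automaton has at least `n / (4e²)` states: the probability of the opposite
event is at most `C / n` for an absolute constant `C > 0`. -/
theorem probSmallSubautomaton_le :
    ∃ C > (0 : ℝ), ∀ n : ℕ, 1 ≤ n → probSmallSubautomaton n ≤ C / n := by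
  refine ⟨2 * exp 1, by positivity, fun n hn => ?_⟩
  let Small : ℕ → Prop := fun k => 0 < k ∧ (k : ℝ) < n / (4 * exp 1 ^ 2)
  have hprob : probSmallSubautomaton n = (#{fg : (Fin n → Fin n) × (Fin n → Fin n) |
      ∃ P ∈ ({P | Small #P} : Finset (Finset (Fin n))), ∀ x ∈ P, fg.1 x ∈ P ∧ fg.2 x ∈ P} : ℝ) /
      Fintype.card ((Fin n → Fin n) × (Fin n → Fin n)) := by
    unfold probSmallSubautomaton
    congr 3
    ext fg
    simp only [Small, mem_filter, mem_univ, true_and, card_pos]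
    exact exists_congr fun P => by tauto
  have hsmall : ∀ k ∈ {k ∈ range (n + 1) | Small k}, k ≠ 0 ∧ 4 * exp 1 * k ≤ n := by
    intro k hk
    obtain ⟨-, hk0, hkn⟩ := mem_filter.mp hk
    rw [lt_div_iff₀ (by positivity)] at hkn
    have he : 1 ≤ exp 1 := one_le_exp zero_le_one
    exact ⟨hk0.ne', by nlinarith⟩
  calc probSmallSubautomaton n ≤ ∑ P : Finset (Fin n) with Small #P, ((#P / n : ℝ) ^ #P) ^ 2 := by
        have hbound := card_filter_exists_closed_div_le_sum (α := Fin n) {P | Small #P}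
        rw [Fintype.card_fin] at hbound
        rw [hprob]
        convert hbound
    _ = ∑ k ∈ range (n + 1) with Small k, (n.choose k : ℝ) * (((k : ℝ) / n) ^ k) ^ 2 := by
        simpa using sum_filter_card_eq_sum_choose (α := Fin n) Small fun k => ((k / n : ℝ) ^ k) ^ 2
    _ ≤ 2 * exp 1 / n := sum_choose_mul_div_pow_sq_le (Nat.one_le_iff_ne_zero.mp hn) hsmall
end
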